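/- Fix a field k and positive integers r, c. In the toric ideal I(2,r,c) of the no-3-way-interaction model on 2×r×c contingency tables, every binomial arising from a primitive balanced edge set of the associated 3-uniform 3-partite hypergraph (with 𝓔_blue ≠ 𝓔_red) is indispensable; consequently the Graver basis of I(2,r,c) is the unique minimal binomial generating set of I(2,r,c). -/

import Mathlib

open MvPolynomial

namespace ToricHG

variable (K : Type) [Field K] (V : Type) [Fintype V] [DecidableEq V]

/-- The edges of a hypergraph with edge set `E`, as a type. -/
abbrev Edge (E : Finset (Finset V)) : Type := {e : Finset V // e ∈ E}

/-- The monomial map `t_e ↦ ∏_{v ∈ e} x_v`. -/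
noncomputable def phiH (E : Finset (Finset V)) :
    MvPolynomial (Edge V E) K →ₐ[K] MvPolynomial V K :=
  aeval (fun e : Edge V E => ∏ v ∈ e.1, (X v : MvPolynomial V K))

/-- The toric ideal of a hypergraph. -/
noncomputable def toricIdeal (E : Finset (Finset V)) :
    Ideal (MvPolynomial (Edge V E) K) :=
  RingHom.ker (phiH K V E).toRingHom

/-- The number of edges of the multiset `M` containing `v`, counted with multiplicity. -/
def degIn (E : Finset (Finset V)) (v : V) (M : Multiset (Edge V E)) : ℕ :=
  Multiset.card (M.filter (fun e => v ∈ e.1))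

/-- The bicolored edge multiset `(B, R)` is balanced. -/
def Balanced (E : Finset (Finset V)) (B R : Multiset (Edge V E)) : Prop :=
  ∀ v : V, degIn V E v B = degIn V E v R

/-- The binomial arising from the bicolored edge multiset `(B, R)`. -/
noncomputable def binom (E : Finset (Finset V)) (B R : Multiset (Edge V E)) :
    MvPolynomial (Edge V E) K :=
  (B.map fun e => (X e : MvPolynomial (Edge V E) K)).prod -
    (R.map fun e => (X e : MvPolynomial (Edge V E) K)).prod

/-- The balanced edge set `(B, R)` is primitive. -/
def Primitive (E : Finset (Finset V)) (B R : Multiset (Edge V E)) : Prop :=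
  Balanced V E B R ∧
    ¬ ∃ B' R' : Multiset (Edge V E),
        ¬(B' = 0 ∧ R' = 0) ∧ Balanced V E B' R' ∧ B' < B ∧ R' < R

/-- The balanced edge set `(Fb, Fr)` is reducible with separator `S` and
decomposition `((G1b, G1r), S, (G2b, G2r))`. -/
def ReducibleWith (E : Finset (Finset V))
    (Fb Fr S G1b G1r G2b G2r : Multiset (Edge V E)) : Prop :=
  Balanced V E Fb Fr ∧ S ≠ 0 ∧ S.toFinset ⊆ (Fb + Fr).toFinset ∧
    Balanced V E G1b G1r ∧ Balanced V E G2b G2r ∧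
    ¬(G1b = Fb ∧ G1r = Fr) ∧ ¬(G2b = Fb ∧ G2r = Fr) ∧
    S = G1r ∩ G2b ∧ Fb = G1b + G2b ∧ Fr = G1r + G2r

/-- `S` is a splitting set of the balanced edge set `(Eb, Er)` with
decomposition `((G1b, G1r), S, (G2b, G2r))`, i.e. `(Eb, Er) + S` is reducible with
separator `S` and this decomposition. -/
def SplittingSetWith (E : Finset (Finset V))
    (Eb Er S G1b G1r G2b G2r : Multiset (Edge V E)) : Prop :=
  ReducibleWith V E (Eb + S) (Er + S) S G1b G1r G2b G2r

/-- `S` is a proper splitting set of the balanced edge set `(Eb, Er)`. -/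
def ProperSplittingSet (E : Finset (Finset V))
    (Eb Er S : Multiset (Edge V E)) : Prop :=
  ∃ G1b G1r G2b G2r : Multiset (Edge V E),
    SplittingSetWith V E Eb Er S G1b G1r G2b G2r ∧ S < G1r ∧ S < G2b

/-- A binomial: the difference of two distinct monic monomials. -/
def IsBinomial (E : Finset (Finset V)) (f : MvPolynomial (Edge V E) K) : Prop :=
  ∃ a b : (Edge V E) →₀ ℕ, a ≠ b ∧ f = monomial a 1 - monomial b 1

/-- `f` is an indispensable binomial of the toric ideal of the hypergraph. -/
def Indispensable (E : Finset (Finset V)) (f : MvPolynomial (Edge V E) K) : Prop :=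
  ∀ G : Set (MvPolynomial (Edge V E) K),
    (∀ g ∈ G, IsBinomial K V E g) → Ideal.span G = toricIdeal K V E →
      f ∈ G ∨ -f ∈ G

/-- The Graver basis of the toric ideal of the hypergraph: the binomials arising from
primitive balanced edge sets `(B, R)` with `B ≠ R`. -/
def GraverSet (E : Finset (Finset V)) : Set (MvPolynomial (Edge V E) K) :=
  {f | ∃ B R : Multiset (Edge V E), Primitive V E B R ∧ B ≠ R ∧ f = binom K V E B R}

/-- The ideal `I` is generated in degree at most `d`. -/
def GenInDegLE {σ : Type} (I : Ideal (MvPolynomial σ K)) (d : ℕ) : Prop :=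
  I = Ideal.span {f | f ∈ I ∧ f.totalDegree ≤ d}

end ToricHG

/-!
Let `(B, R)` be primitive and suppose every `P` balanced against `B` is `B` or `R`. Then
`x^B - x^R` is indispensable: in a binomial generating set some generator `x^u - x^w` has a term
dividing `x^B`, say `u ≤ B`. Now `(B - u) + w` is balanced against `B` and differs from `B`, so it
is `R`; thus `(u, w)` is a balanced sub-pair of `(B, R)`, and primitivity forces `(u, w) = (B, R)`.

For `2 × r × c` tables this fibre condition holds. Primitivity makes `B` and `R` disjoint, and as
each vertex `w_jk` lies on only the two edges `e_0jk`, `e_1jk`, every `P` balanced against `B`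
satisfies `P ≤ B + R`. Then `(B - P, P - B)` is a balanced sub-pair of `(B, R)`, hence empty or
all of it, that is `P = B` or `P = R`.
-/

namespace ToricHG

section Balanced

variable {V : Type} {E : Finset (Finset V)} {P M N M' N' : Multiset (Edge V E)}

def vertices (M : Multiset (Edge V E)) : Multiset V := M.bind fun e => e.1.val

lemma vertices_zero : vertices (0 : Multiset (Edge V E)) = 0 := Multiset.zero_bind _

lemma vertices_add (M N : Multiset (Edge V E)) : vertices (M + N) = vertices M + vertices N :=
  Multiset.add_bind _ _ _

variable [DecidableEq V]

lemma degIn_eq_count_vertices (v : V) (M : Multiset (Edge V E)) :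
    degIn V E v M = (vertices M).count v := by
  induction M using Multiset.induction_on with
  | empty => simp [degIn, vertices]
  | cons e M ih =>
    rw [vertices, Multiset.cons_bind, Multiset.count_add, ← vertices, ← ih, degIn, degIn,
      Multiset.count_eq_of_nodup e.1.nodup]
    by_cases hv : v ∈ e.1 <;> simp [hv, add_comm]

lemma balanced_iff_vertices_eq : Balanced V E M N ↔ vertices M = vertices N := by
  simp only [Balanced, degIn_eq_count_vertices, ← Multiset.ext]

lemma Balanced.symm (h : Balanced V E M N) : Balanced V E N M := fun v => (h v).symm

lemma Balanced.trans (h : Balanced V E M N) (h' : Balanced V E N P) : Balanced V E M P :=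
  fun v => (h v).trans (h' v)

lemma Balanced.tsub (h : Balanced V E M N) (h' : Balanced V E M' N') (hM : M' ≤ M)
    (hN : N' ≤ N) : Balanced V E (M - M') (N - N') := by
  rw [balanced_iff_vertices_eq] at *
  apply add_left_cancel (a := vertices M')
  rw [← vertices_add, add_tsub_cancel_of_le hM, h, h', ← vertices_add, add_tsub_cancel_of_le hN]

lemma Balanced.eq_of_le (hE : ∅ ∉ E) (h : Balanced V E M N) (hle : M ≤ N) : M = N := by
  have hvert : vertices (N - M) = 0 := by
    have := Balanced.tsub h.symm (fun _ => rfl) hle le_rfl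
    rwa [tsub_self, balanced_iff_vertices_eq, vertices_zero] at this
  by_contra hne
  obtain ⟨e, he⟩ := Multiset.exists_mem_of_ne_zero
    (mt tsub_eq_zero_iff_le.mp fun h' => hne (le_antisymm hle h'))
  obtain ⟨v, hv⟩ := Finset.nonempty_iff_ne_empty.mpr (ne_of_mem_of_not_mem e.2 hE)
  have : v ∈ vertices (N - M) := Multiset.mem_bind.mpr ⟨e, he, hv⟩
  simp [hvert] at this

end Balanced

section Primitive

variable {V : Type} [DecidableEq V] {E : Finset (Finset V)} {B R P U W : Multiset (Edge V E)}

lemma Primitive.eq_or_eq_of_le (h : Primitive V E B R) (hUW : Balanced V E U W) (hU : U ≤ B)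
    (hW : W ≤ R) : (U = 0 ∧ W = 0) ∨ U = B ∨ W = R := by
  by_contra! hne
  exact h.2 ⟨U, W, fun h0 => hne.1 h0.1 h0.2, hUW, lt_of_le_of_ne hU hne.2.1,
    lt_of_le_of_ne hW hne.2.2⟩

lemma Primitive.inter_eq_zero (hE : ∅ ∉ E) (h : Primitive V E B R) (hne : B ≠ R) :
    B ∩ R = 0 := by
  rcases h.eq_or_eq_of_le (fun _ => rfl) Multiset.inter_le_left Multiset.inter_le_right with
    h0 | hB | hR
  · exact h0.1
  · exact absurd (h.1.eq_of_le hE (hB ▸ Multiset.inter_le_right)) hne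
  · exact absurd (h.1.symm.eq_of_le hE (hR ▸ Multiset.inter_le_left)).symm hne

lemma Primitive.eq_or_eq_of_le_add (hE : ∅ ∉ E) (h : Primitive V E B R)
    (hBP : Balanced V E B P) (hle : P ≤ B + R) : P = B ∨ P = R := by
  have hbal : Balanced V E (B - P) (P - B) := by
    have := hBP.tsub (fun _ => rfl) (Multiset.inter_le_left (t := P))
      (Multiset.inter_le_right (s := B))
    rwa [Multiset.sub_inter, Multiset.inter_comm, Multiset.sub_inter] at this
  have hPR : P - B ≤ R := tsub_le_iff_left.mpr hle
  have of_sub_eq : P - B = R → P = R := fun hR =>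
    ((hBP.symm.trans h.1).symm.eq_of_le hE (hR ▸ tsub_le_self)).symm
  rcases h.eq_or_eq_of_le hbal tsub_le_self hPR with h0 | hB | hR
  · exact Or.inl (le_antisymm (tsub_eq_zero_iff_le.mp h0.2) (tsub_eq_zero_iff_le.mp h0.1))
  · rw [hB] at hbal
    exact Or.inr (of_sub_eq ((hbal.symm.trans h.1).eq_of_le hE hPR))
  · exact Or.inr (of_sub_eq hR)

lemma Primitive.eq_of_le_of_fiber (h : Primitive V E B R)
    (hfib : ∀ P, Balanced V E B P → P = B ∨ P = R) (hUW : Balanced V E U W) (hne : U ≠ W)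
    (hU : U ≤ B) : U = B ∧ W = R := by
  have hB : B = B - U + U := (tsub_add_cancel_of_le hU).symm
  have hBW : Balanced V E B (B - U + W) := by
    rw [balanced_iff_vertices_eq] at hUW ⊢
    conv_lhs => rw [hB]
    rw [vertices_add, vertices_add, hUW]
  rcases hfib _ hBW with hW | hW
  · exact absurd (add_left_cancel (hW.trans hB)).symm hne
  · rcases h.eq_or_eq_of_le hUW hU (hW ▸ le_add_self) with h0 | hUB | hWR
    · exact absurd (h0.1.trans h0.2.symm) hne
    · subst hUB
      simpa using hW
    · subst hWR
      have : B - U = 0 := by simpa using hW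
      exact ⟨le_antisymm hU (tsub_eq_zero_iff_le.mp this), rfl⟩

end Primitive

lemma _root_.MvPolynomial.prod_map_X_eq_monomial {σ R : Type*} [CommSemiring R] [DecidableEq σ]
    (S : Multiset σ) : (S.map X).prod = monomial (Multiset.toFinsupp S) (1 : R) := by
  induction S using Multiset.induction_on with
  | empty => simp
  | cons a S ih =>
    rw [Multiset.map_cons, Multiset.prod_cons, ih, ← Multiset.singleton_add,
      Multiset.toFinsupp_add, Multiset.toFinsupp_singleton, X, monomial_mul, one_mul]

section ToricIdeal

variable {K : Type} [Field K] {V : Type} {E : Finset (Finset V)} {M N : Multiset (Edge V E)}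

lemma mem_toricIdeal_iff {f : MvPolynomial (Edge V E) K} :
    f ∈ toricIdeal K V E ↔ phiH K V E f = 0 :=
  RingHom.mem_ker

lemma binom_add (B₁ R₁ B₂ R₂ : Multiset (Edge V E)) :
    binom K V E (B₁ + B₂) (R₁ + R₂) =
      (B₂.map X).prod * binom K V E B₁ R₁ + (R₁.map X).prod * binom K V E B₂ R₂ := by
  simp only [binom, Multiset.map_add, Multiset.prod_add]
  ring

variable [DecidableEq V]

lemma binom_toMultiset (u w : Edge V E →₀ ℕ) :
    binom K V E u.toMultiset w.toMultiset = monomial u 1 - monomial w 1 := by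
  simp only [binom, prod_map_X_eq_monomial, Finsupp.toMultiset_toFinsupp]

lemma phiH_prod_map_X (M : Multiset (Edge V E)) :
    phiH K V E (M.map X).prod = monomial (vertices M).toFinsupp 1 := by
  rw [map_multiset_prod, Multiset.map_map, vertices, ← prod_map_X_eq_monomial,
    Multiset.map_bind, Multiset.prod_bind]
  congr 2
  funext e
  exact aeval_X _ e

lemma phiH_monomial (m : Edge V E →₀ ℕ) (c : K) :
    phiH K V E (monomial m c) = monomial (vertices m.toMultiset).toFinsupp c := by
  rw [← mul_one c, ← smul_eq_mul, ← smul_monomial, ← smul_monomial, map_smul, ← phiH_prod_map_X,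
    prod_map_X_eq_monomial, Finsupp.toMultiset_toFinsupp]

lemma binom_mem_toricIdeal_iff : binom K V E M N ∈ toricIdeal K V E ↔ Balanced V E M N := by
  rw [mem_toricIdeal_iff, binom, map_sub, phiH_prod_map_X, phiH_prod_map_X, sub_eq_zero,
    monomial_left_inj one_ne_zero, EmbeddingLike.apply_eq_iff_eq, balanced_iff_vertices_eq]

lemma exists_balanced_mem_support {f : MvPolynomial (Edge V E) K} (hf : f ∈ toricIdeal K V E)
    {a : Edge V E →₀ ℕ} (ha : a ∈ f.support) :
    ∃ b ∈ f.support, b ≠ a ∧ Balanced V E a.toMultiset b.toMultiset := by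
  by_contra! hno
  have hphi : phiH K V E f =
      ∑ m ∈ f.support, monomial (vertices m.toMultiset).toFinsupp (coeff m f) := by
    conv_lhs => rw [f.as_sum]
    simp only [map_sum, phiH_monomial]
  have hcoeff := congrArg (coeff (vertices a.toMultiset).toFinsupp) hphi
  rw [mem_toricIdeal_iff.mp hf, coeff_zero, coeff_sum, Finset.sum_eq_single_of_mem a ha,
    coeff_monomial, if_pos rfl] at hcoeff
  · exact mem_support_iff.mp ha hcoeff.symm
  · intro b hb hba
    rw [coeff_monomial, if_neg fun heq => hno b hb hba ?_]
    exact (balanced_iff_vertices_eq.mpr (Multiset.toFinsupp.injective heq)).symm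

lemma toricIdeal_le_span_balanced :
    toricIdeal K V E ≤ Ideal.span {f | ∃ M N, Balanced V E M N ∧ f = binom K V E M N} := by
  intro f hf
  induction hn : f.support.card using Nat.strong_induction_on generalizing f with
  | _ n ih =>
  rcases f.support.eq_empty_or_nonempty with h0 | ⟨a, ha⟩
  · rw [support_eq_empty.mp h0]
    exact zero_mem _
  obtain ⟨b, hb, hba, hbal⟩ := exists_balanced_mem_support hf ha
  set g := binom K V E a.toMultiset b.toMultiset with hg
  rw [binom_toMultiset] at hg
  have hgI : g ∈ toricIdeal K V E := binom_mem_toricIdeal_iff.mpr hbal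
  have hdiff : monomial a (coeff a f) - monomial b (coeff a f) = C (coeff a f) * g := by
    rw [hg, mul_sub, C_mul_monomial, C_mul_monomial, mul_one]
  have hcard : (f - C (coeff a f) * g).support.card < n := by
    rw [← hn, ← hdiff]
    refine (Finset.card_le_card ?_).trans_lt (Finset.card_erase_lt_of_mem ha)
    refine (support_sub_monomial_sub_monomial_subset f a b _ hba.symm rfl).trans ?_
    exact Finset.union_subset subset_rfl
      (Finset.singleton_subset_iff.mpr (Finset.mem_erase.mpr ⟨hba, hb⟩))
  have hmem := ih _ hcard (sub_mem hf (Ideal.mul_mem_left _ _ hgI)) rfl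
  rw [← sub_add_cancel f (C (coeff a f) * g)]
  exact add_mem hmem (Ideal.mul_mem_left _ _ (Ideal.subset_span ⟨_, _, hbal, rfl⟩))

lemma binom_mem_span_graverSet (h : Balanced V E M N) :
    binom K V E M N ∈ Ideal.span (GraverSet K V E) := by
  induction hn : Multiset.card M + Multiset.card N using Nat.strong_induction_on
    generalizing M N with
  | _ n ih =>
  by_cases hMN : M = N
  · rw [hMN, binom, sub_self]
    exact zero_mem _
  by_cases hp : Primitive V E M N
  · exact Ideal.subset_span ⟨M, N, hp, hMN, rfl⟩
  obtain ⟨M', N', hne, hbal, hM, hN⟩ := not_not.mp (not_and.mp hp h)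
  have hpos : 0 < Multiset.card M' + Multiset.card N' := Nat.pos_of_ne_zero fun h0 =>
    hne ⟨Multiset.card_eq_zero.mp (by omega), Multiset.card_eq_zero.mp (by omega)⟩
  have hcard := Multiset.card_lt_card hM
  have hcard' := Multiset.card_lt_card hN
  rw [← add_tsub_cancel_of_le hM.le, ← add_tsub_cancel_of_le hN.le, binom_add]
  refine add_mem (Ideal.mul_mem_left _ _ (ih _ (by omega) hbal rfl))
    (Ideal.mul_mem_left _ _ (ih _ ?_ (h.tsub hbal hM.le hN.le) rfl))
  rw [Multiset.card_sub hM.le, Multiset.card_sub hN.le]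
  omega

lemma span_graverSet_eq_toricIdeal : Ideal.span (GraverSet K V E) = toricIdeal K V E :=
  le_antisymm
    (Ideal.span_le.mpr fun _ ⟨_, _, hp, _, hf⟩ => hf ▸ binom_mem_toricIdeal_iff.mpr hp.1)
    (toricIdeal_le_span_balanced.trans
      (Ideal.span_le.mpr fun _ ⟨_, _, h, hf⟩ => hf ▸ binom_mem_span_graverSet h))

end ToricIdeal

theorem Primitive.indispensable {K : Type} [Field K] {V : Type} [DecidableEq V]
    {E : Finset (Finset V)} {B R : Multiset (Edge V E)} (h : Primitive V E B R) (hne : B ≠ R)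
    (hfib : ∀ P, Balanced V E B P → P = B ∨ P = R) :
    Indispensable K V E (binom K V E B R) := by
  intro G hG hspan
  by_contra! hnot
  set a := B.toFinsupp
  have eq_of_le : ∀ u w : Edge V E →₀ ℕ, Balanced V E u.toMultiset w.toMultiset → u ≠ w →
      u ≤ a → monomial u 1 - monomial w 1 = binom K V E B R := by
    intro u w hbal huw hua
    obtain ⟨rfl, rfl⟩ := h.eq_of_le_of_fiber hfib hbal
      (fun h' => huw (Finsupp.orderIsoMultiset.injective h'))
      (by simpa [a] using Finsupp.orderIsoMultiset.le_iff_le.mpr hua)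
    exact (binom_toMultiset u w).symm
  -- The monomial ideal of the monomials not dividing `x^B` contains `G` but not `x^B - x^R`.
  have hGJ : G ⊆ Ideal.span ((fun s => monomial s (1 : K)) '' {s | ¬s ≤ a}) := by
    intro g hg
    obtain ⟨u, w, huw, rfl⟩ := hG g hg
    have hbal : Balanced V E u.toMultiset w.toMultiset := by
      rw [← binom_mem_toricIdeal_iff (K := K), binom_toMultiset, ← hspan]
      exact Ideal.subset_span hg
    have hu : ¬u ≤ a := fun hua => hnot.1 (eq_of_le u w hbal huw hua ▸ hg)
    have hw : ¬w ≤ a := fun hwa => hnot.2 (by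
      rw [← eq_of_le w u hbal.symm huw.symm hwa, neg_sub]
      exact hg)
    rw [SetLike.mem_coe, mem_ideal_span_monomial_image]
    intro m hm
    rcases Finset.mem_union.mp (support_sub _ _ _ hm) with hm | hm <;>
      rw [Finset.mem_singleton.mp (support_monomial_subset hm)]
    exacts [⟨u, hu, le_rfl⟩, ⟨w, hw, le_rfl⟩]
  have hmem := Ideal.span_le.mpr hGJ (hspan ▸ binom_mem_toricIdeal_iff.mpr h.1)
  have ha : a ∈ (binom K V E B R).support := by
    rw [← Multiset.toFinsupp_toMultiset B, ← Multiset.toFinsupp_toMultiset R, binom_toMultiset,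
      mem_support_iff, coeff_sub, coeff_monomial, coeff_monomial, if_pos rfl,
      if_neg (fun h' => hne (Multiset.toFinsupp.injective h').symm)]
    simp
  obtain ⟨s, hs, hsa⟩ := mem_ideal_span_monomial_image.mp hmem a ha
  exact hs hsa

lemma degIn_eq_count_add_count {V : Type} [DecidableEq V] {E : Finset (Finset V)} {v : V}
    {e₀ e₁ : Edge V E} (hne : e₀ ≠ e₁) (hv : ∀ e : Edge V E, v ∈ e.1 ↔ e = e₀ ∨ e = e₁)
    (M : Multiset (Edge V E)) : degIn V E v M = M.count e₀ + M.count e₁ := by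
  have hsplit := Multiset.filter_add_filter (· = e₀) (· = e₁) M
  have hboth : M.filter (fun e => e = e₀ ∧ e = e₁) = 0 :=
    Multiset.filter_eq_nil.mpr fun e _ h => hne (h.1.symm.trans h.2)
  rw [hboth, add_zero] at hsplit
  rw [degIn, Multiset.filter_congr fun e _ => hv e, ← hsplit, Multiset.card_add,
    Multiset.filter_eq', Multiset.filter_eq', Multiset.card_replicate, Multiset.card_replicate]

section NoThreeWay

variable {β γ : Type} [Fintype β] [DecidableEq β] [Fintype γ] [DecidableEq γ]

abbrev TableVertex (β γ : Type) : Type := (Fin 2 × β) ⊕ (Fin 2 × γ) ⊕ (β × γ)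

def cellEdge (p : Fin 2 × β × γ) : Finset (TableVertex β γ) :=
  {Sum.inl (p.1, p.2.1), Sum.inr (Sum.inl (p.1, p.2.2)), Sum.inr (Sum.inr (p.2.1, p.2.2))}

variable (β γ) in
def noThreeWayEdges : Finset (Finset (TableVertex β γ)) := Finset.univ.image cellEdge

def cell (p : Fin 2 × β × γ) : Edge (TableVertex β γ) (noThreeWayEdges β γ) :=
  ⟨cellEdge p, Finset.mem_image_of_mem _ (Finset.mem_univ p)⟩

lemma cell_surjective : Function.Surjective (cell (β := β) (γ := γ)) := by
  rintro ⟨e, he⟩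
  obtain ⟨p, -, rfl⟩ := Finset.mem_image.mp he
  exact ⟨p, rfl⟩

lemma cell_injective : Function.Injective (cell (β := β) (γ := γ)) := by
  intro p q h
  have h' : cellEdge p = cellEdge q := congrArg Subtype.val h
  have hu : Sum.inl (p.1, p.2.1) ∈ cellEdge q := h' ▸ by simp [cellEdge]
  have hv : Sum.inr (Sum.inl (p.1, p.2.2)) ∈ cellEdge q := h' ▸ by simp [cellEdge]
  simp only [cellEdge, Finset.mem_insert, Finset.mem_singleton, Sum.inl.injEq, Sum.inr.injEq,
    Prod.ext_iff, reduceCtorEq, or_false, false_or] at hu hv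
  exact Prod.ext hu.1 (Prod.ext hu.2 hv.2)

lemma empty_notMem_noThreeWayEdges : ∅ ∉ noThreeWayEdges β γ := by
  simp [noThreeWayEdges, cellEdge]

lemma mem_cell_iff (j : β) (k : γ) (e : Edge (TableVertex β γ) (noThreeWayEdges β γ)) :
    Sum.inr (Sum.inr (j, k)) ∈ e.1 ↔ e = cell (0, j, k) ∨ e = cell (1, j, k) := by
  obtain ⟨⟨i, j', k'⟩, rfl⟩ := cell_surjective e
  simp only [cell_injective.eq_iff]
  fin_cases i <;> simp [cell, cellEdge, eq_comm]

-- Instance search gives up on this type at its default size limit.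
local instance : DecidableEq (Edge (TableVertex β γ) (noThreeWayEdges β γ)) :=
  Subtype.instDecidableEq

variable {B R P M N : Multiset (Edge (TableVertex β γ) (noThreeWayEdges β γ))}

lemma Balanced.count_cell_add_count_cell (h : Balanced _ _ M N) (j : β) (k : γ) :
    M.count (cell (0, j, k)) + M.count (cell (1, j, k)) =
      N.count (cell (0, j, k)) + N.count (cell (1, j, k)) := by
  have hne : cell (0, j, k) ≠ cell (1, j, k) := by simp [cell_injective.eq_iff]
  have := h (Sum.inr (Sum.inr (j, k)))
  rwa [degIn_eq_count_add_count hne (mem_cell_iff j k),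
    degIn_eq_count_add_count hne (mem_cell_iff j k)] at this

lemma le_add_of_balanced (hBR : Balanced _ _ B R) (hBP : Balanced _ _ B P) (hdisj : B ∩ R = 0) :
    P ≤ B + R := by
  rw [Multiset.le_iff_count]
  intro e
  obtain ⟨⟨i, j, k⟩, rfl⟩ := cell_surjective e
  have h₀ := congrArg (Multiset.count (cell (0, j, k))) hdisj
  have h₁ := congrArg (Multiset.count (cell (1, j, k))) hdisj
  rw [Multiset.count_inter, Multiset.count_zero] at h₀ h₁
  have hR := hBR.count_cell_add_count_cell j k
  have hP := hBP.count_cell_add_count_cell j k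
  rw [Multiset.count_add]
  fin_cases i <;> simp only [Fin.zero_eta, Fin.mk_one] <;> omega

lemma Primitive.eq_or_eq_of_balanced_noThreeWay (h : Primitive _ _ B R) (hne : B ≠ R)
    (hBP : Balanced _ _ B P) : P = B ∨ P = R :=
  h.eq_or_eq_of_le_add empty_notMem_noThreeWayEdges hBP
    (le_add_of_balanced h.1 hBP (h.inter_eq_zero empty_notMem_noThreeWayEdges hne))

end NoThreeWay

theorem no3way_two_tables_graver_indispensable_general
    (K : Type) [Field K] (r c : ℕ)
    (E : Finset (Finset ((Fin 2 × Fin r) ⊕ (Fin 2 × Fin c) ⊕ (Fin r × Fin c))))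
    (hEdef : E = Finset.image (fun p : Fin 2 × Fin r × Fin c =>
        ({Sum.inl (p.1, p.2.1), Sum.inr (Sum.inl (p.1, p.2.2)),
          Sum.inr (Sum.inr (p.2.1, p.2.2))} :
          Finset ((Fin 2 × Fin r) ⊕ (Fin 2 × Fin c) ⊕ (Fin r × Fin c)))) Finset.univ) :
    (∀ f ∈ GraverSet K ((Fin 2 × Fin r) ⊕ (Fin 2 × Fin c) ⊕ (Fin r × Fin c)) E,
        Indispensable K ((Fin 2 × Fin r) ⊕ (Fin 2 × Fin c) ⊕ (Fin r × Fin c)) E f) ∧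
      Ideal.span (GraverSet K ((Fin 2 × Fin r) ⊕ (Fin 2 × Fin c) ⊕ (Fin r × Fin c)) E) =
        toricIdeal K ((Fin 2 × Fin r) ⊕ (Fin 2 × Fin c) ⊕ (Fin r × Fin c)) E := by
  subst hEdef
  refine ⟨?_, span_graverSet_eq_toricIdeal⟩
  rintro f ⟨B, R, h, hne, rfl⟩
  exact h.indispensable hne fun _ =>
    h.eq_or_eq_of_balanced_noThreeWay (β := Fin r) (γ := Fin c) hne

/-- In the toric ideal `I(2,r,c)` of the no-`3`-way-interaction model,
presented as the toric ideal of the `3`-uniform `3`-partite hypergraph with vertices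
`{u_{ij}} ∪ {v_{ik}} ∪ {w_{jk}}` and edges `e_{ijk} = {u_{ij}, v_{ik}, w_{jk}}`, every binomial
arising from a primitive balanced edge set `(B, R)` with `B ≠ R` is indispensable; consequently
the Graver basis is the unique minimal binomial generating set (in particular it generates). -/
theorem no3way_two_tables_graver_indispensable
    (K : Type) [Field K] (r c : ℕ) (hr : 0 < r) (hc : 0 < c)
    (E : Finset (Finset ((Fin 2 × Fin r) ⊕ (Fin 2 × Fin c) ⊕ (Fin r × Fin c))))
    (hEdef : E = Finset.image (fun p : Fin 2 × Fin r × Fin c =>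
        ({Sum.inl (p.1, p.2.1), Sum.inr (Sum.inl (p.1, p.2.2)),
          Sum.inr (Sum.inr (p.2.1, p.2.2))} :
          Finset ((Fin 2 × Fin r) ⊕ (Fin 2 × Fin c) ⊕ (Fin r × Fin c)))) Finset.univ) :
    (∀ f ∈ GraverSet K ((Fin 2 × Fin r) ⊕ (Fin 2 × Fin c) ⊕ (Fin r × Fin c)) E,
        Indispensable K ((Fin 2 × Fin r) ⊕ (Fin 2 × Fin c) ⊕ (Fin r × Fin c)) E f) ∧
      Ideal.span (GraverSet K ((Fin 2 × Fin r) ⊕ (Fin 2 × Fin c) ⊕ (Fin r × Fin c)) E) =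
        toricIdeal K ((Fin 2 × Fin r) ⊕ (Fin 2 × Fin c) ⊕ (Fin r × Fin c)) E :=
  no3way_two_tables_graver_indispensable_general K r c E hEdef

end ToricHG
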